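/- arXiv:1710.05033 — 2 statements merged into one kernel-verified Lean document; each statement's English description precedes it below -/
import Mathlib

section
/- Let d ≥ 1 and n ≥ 1 be natural numbers, let π₀ and π₁ be complex d×d matrices that are orthogonal projections (Hermitian and idempotent) satisfying π₀ + π₁ = I, and let ψ ∈ ℂ^d be a unit vector. Fix a natural number k ≤ n and let Π = Σ_{b ∈ {0,1}^n, Σᵢ bᵢ = n−k} π_{b₁} ⊗ ⋯ ⊗ π_{bₙ} be the sum of the n-fold Kronecker products of the projections over all binary strings b of length n with exactly n−k ones. Then ⟨ψ^{⊗n}, Π ψ^{⊗n}⟩ ≤ exp(−2·n·(⟨ψ, π₀ ψ⟩ − k/n)²). -/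
/-!
Expanding the Kronecker products, `⟨ψ^{⊗n}, Π ψ^{⊗n}⟩ = ∑_b ∏ᵢ ⟨ψ, π_{bᵢ} ψ⟩ = C(n,k) pᵏ (1-p)ⁿ⁻ᵏ`
with `p = ⟨ψ, π₀ ψ⟩ ∈ [0, 1]`: the probability that a Binomial(n, p) variable equals `k`.
Tilting this single term by `e^{tk}` bounds it by `(1 - p + p eᵗ)ⁿ e^{-tk}`, and Hoeffding's lemma
for a Bernoulli variable, `1 - p + p eᵗ ≤ e^{pt + t²/8}`, with `t = 4 (k/n - p)` gives the bound.
-/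

open Matrix ComplexOrder

section Hoeffding

open Real ProbabilityTheory MeasureTheory

theorem one_sub_add_mul_exp_le {q : ℝ} (hq0 : 0 ≤ q) (hq1 : q ≤ 1) (t : ℝ) :
    1 - q + q * exp t ≤ exp (q * t + t ^ 2 / 8) := by
  let μ := bernoulliMeasure (1 : ℝ) 0 ⟨q, hq0, hq1⟩
  have hbdd : ∀ᵐ x ∂μ, id x ∈ Set.Icc (0 : ℝ) 1 :=
    ae_iff.2 (bernoulliMeasure_apply_of_notMem_of_notMem _ measurableSet_Icc.compl
      (by simp) (by simp))
  have hoeffding : q * exp (t * (1 - q)) + (1 - q) * exp (-(t * q)) ≤ exp (t ^ 2 / 8) := by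
    have := (hasSubgaussianMGF_of_mem_Icc measurable_id.aemeasurable hbdd).mgf_le t
    norm_num [mgf, μ, integral_bernoulliMeasure] at this
    exact this.trans_eq (by ring_nf)
  have h1 : exp (q * t) * exp (t * (1 - q)) = exp t := by rw [← exp_add]; ring_nf
  have h0 : exp (q * t) * exp (-(t * q)) = 1 := by rw [← exp_add]; ring_nf; exact exp_zero
  calc 1 - q + q * exp t = exp (q * t) * (q * exp (t * (1 - q)) + (1 - q) * exp (-(t * q))) := by
        linear_combination -q * h1 - (1 - q) * h0
    _ ≤ exp (q * t) * exp (t ^ 2 / 8) := by gcongr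
    _ = exp (q * t + t ^ 2 / 8) := (exp_add _ _).symm

theorem choose_mul_pow_mul_pow_mul_exp_le {n k : ℕ} (hk : k ≤ n) {p : ℝ} (hp0 : 0 ≤ p)
    (hp1 : p ≤ 1) (t : ℝ) :
    n.choose k * p ^ k * (1 - p) ^ (n - k) * exp (k * t) ≤ exp (n * (p * t + t ^ 2 / 8)) :=
  calc _ = (p * exp t) ^ k * (1 - p) ^ (n - k) * n.choose k := by
        rw [mul_pow, ← exp_nat_mul]; ring
    _ ≤ ∑ j ∈ Finset.range (n + 1), (p * exp t) ^ j * (1 - p) ^ (n - j) * n.choose j :=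
        Finset.single_le_sum (f := fun j => (p * exp t) ^ j * (1 - p) ^ (n - j) * n.choose j)
          (fun j _ => by have := exp_pos t; positivity) (Finset.mem_range.2 (by omega))
    _ = (1 - p + p * exp t) ^ n := by rw [← add_pow, add_comm]
    _ ≤ exp (p * t + t ^ 2 / 8) ^ n := by
        gcongr
        exact one_sub_add_mul_exp_le hp0 hp1 t
    _ = _ := (exp_nat_mul _ _).symm

theorem choose_mul_pow_mul_pow_le_exp {n k : ℕ} (hk : k ≤ n) {p : ℝ} (hp0 : 0 ≤ p)
    (hp1 : p ≤ 1) :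
    n.choose k * p ^ k * (1 - p) ^ (n - k) ≤ exp (-2 * n * (p - k / n) ^ 2) := by
  set a : ℝ := k / n
  have hka : (k : ℝ) = a * n := by
    rcases eq_or_ne n 0 with rfl | hn
    · simp [Nat.le_zero.1 hk]
    · exact (div_mul_cancel₀ _ (Nat.cast_ne_zero.2 hn)).symm
  have key := choose_mul_pow_mul_pow_mul_exp_le hk hp0 hp1 (4 * (a - p))
  rw [← le_div_iff₀ (exp_pos _), ← exp_sub, hka] at key
  exact key.trans_eq (congrArg exp (by ring))

end Hoeffding

section BinaryStrings

open Finset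

variable {ι R : Type*} [Fintype ι] [DecidableEq ι] [CommSemiring R]

theorem prod_apply_ite_mem (S : Finset ι) (c : Fin 2 → R) :
    ∏ i, c (if i ∈ S then 1 else 0) = c 0 ^ (Fintype.card ι - #S) * c 1 ^ #S := by
  simp only [apply_ite c, prod_ite, prod_const, filter_mem_eq_inter, univ_inter,
    filter_not, ← card_univ_sdiff]
  ring

theorem sum_prod_apply_filter_sum_val_eq (r : ℕ) (c : Fin 2 → R) :
    ∑ b ∈ univ.filter (fun b : ι → Fin 2 => ∑ i, (b i : ℕ) = r), ∏ i, c (b i) =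
      (Fintype.card ι).choose r * c 0 ^ (Fintype.card ι - r) * c 1 ^ r := by
  have hbit (j : Fin 2) : (if j = 1 then 1 else 0) = j := by fin_cases j <;> rfl
  have hval (j : Fin 2) : (j : ℕ) = if j = 1 then 1 else 0 := by fin_cases j <;> rfl
  have hcard (b : ι → Fin 2) : ∑ i, (b i : ℕ) = #{i | b i = 1} := by
    simp only [card_filter, hval]
  calc _ = ∑ S ∈ powersetCard r univ, ∏ i, c (if i ∈ S then 1 else 0) := by
        refine sum_nbij' (fun b => univ.filter (b · = 1)) (fun S i => if i ∈ S then 1 else 0)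
          (fun b hb => by simp_all) (fun S hS => ?_) (fun b _ => ?_) (fun S _ => ?_)
          (fun b _ => ?_)
        · simp only [mem_powersetCard, subset_univ, true_and] at hS
          simp [hcard, hS]
        all_goals simp [hbit]
    _ = _ := by
        rw [sum_congr rfl fun S hS => by rw [prod_apply_ite_mem, (mem_powersetCard.1 hS).2],
          sum_const, card_powersetCard, card_univ, nsmul_eq_mul, mul_assoc]

end BinaryStrings

theorem dotProduct_kronecker_mulVec_tensorPower {ι α R : Type*} [Fintype ι] [DecidableEq ι]
    [Fintype α] [CommSemiring R] [StarRing R] (A : ι → Matrix α α R) (ψ : α → R) :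
    star (fun x : ι → α => ∏ i, ψ (x i)) ⬝ᵥ
        (of fun x y : ι → α => ∏ i, A i (x i) (y i)) *ᵥ (fun x => ∏ i, ψ (x i)) =
      ∏ i, star ψ ⬝ᵥ A i *ᵥ ψ := by
  simp only [dotProduct, mulVec, of_apply, Pi.star_apply, star_prod, Finset.mul_sum,
    Fintype.prod_sum, ← Finset.prod_mul_distrib]

open scoped MatrixOrder in
theorem IsStarProjection.dotProduct_mulVec_nonneg {𝕜 m : Type*} [RCLike 𝕜] [Fintype m]
    [DecidableEq m] {P : Matrix m m 𝕜} (hP : IsStarProjection P) (v : m → 𝕜) :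
    0 ≤ star v ⬝ᵥ P *ᵥ v :=
  hP.nonneg.posSemidef.dotProduct_mulVec_nonneg v

theorem tensor_power_typicality_bound_general
    (d n : ℕ)
    (π₀ π₁ : Matrix (Fin d) (Fin d) ℂ)
    (hπ₀herm : π₀.IsHermitian) (hπ₀idem : π₀ * π₀ = π₀)
    (hsum : π₀ + π₁ = 1)
    (ψ : Fin d → ℂ) (hψ : star ψ ⬝ᵥ ψ = 1)
    (k : ℕ) (hk : k ≤ n)
    (Pi : Matrix (Fin n → Fin d) (Fin n → Fin d) ℂ)
    (hPi : Pi = ∑ b ∈ Finset.univ.filter (fun b : Fin n → Fin 2 => ∑ i, (b i : ℕ) = n - k),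
      Matrix.of (fun x y : Fin n → Fin d => ∏ i, (![π₀, π₁] (b i)) (x i) (y i)))
    (Ψ : (Fin n → Fin d) → ℂ) (hΨ : Ψ = fun x => ∏ i, ψ (x i)) :
    star Ψ ⬝ᵥ Pi.mulVec Ψ ≤
      (Real.exp (-2 * n * ((star ψ ⬝ᵥ π₀.mulVec ψ).re - (k : ℝ) / n) ^ 2) : ℂ) := by
  have hπ₀ : IsStarProjection π₀ := ⟨hπ₀idem, hπ₀herm⟩
  have hπ₁ : π₁ = 1 - π₀ := eq_sub_of_add_eq' hsum
  obtain ⟨p, hp0, hp⟩ : ∃ p : ℝ, 0 ≤ p ∧ (p : ℂ) = star ψ ⬝ᵥ π₀ *ᵥ ψ :=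
    RCLike.nonneg_iff_exists_ofReal.1 (hπ₀.dotProduct_mulVec_nonneg ψ)
  have hq : star ψ ⬝ᵥ π₁ *ᵥ ψ = ((1 - p : ℝ) : ℂ) := by
    rw [hπ₁, sub_mulVec, one_mulVec, dotProduct_sub, hψ, ← hp]; push_cast; rfl
  have hp1 : 0 ≤ 1 - p := by
    rw [← Complex.zero_le_real, ← hq, hπ₁]; exact hπ₀.one_sub.dotProduct_mulVec_nonneg ψ
  have hvalue : star Ψ ⬝ᵥ Pi *ᵥ Ψ = ((n.choose k * p ^ k * (1 - p) ^ (n - k) : ℝ) : ℂ) := by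
    subst hPi hΨ
    rw [sum_mulVec, dotProduct_sum]
    simp only [dotProduct_kronecker_mulVec_tensorPower]
    rw [sum_prod_apply_filter_sum_val_eq (c := fun j => star ψ ⬝ᵥ ![π₀, π₁] j *ᵥ ψ)]
    simp [← hp, hq, Nat.sub_sub_self hk, Nat.choose_symm hk]
  rw [hvalue, ← hp, Complex.ofReal_re, Complex.real_le_real]
  exact choose_mul_pow_mul_pow_le_exp hk hp0 (by linarith)

/-- For orthogonal projections `π₀, π₁` on `ℂ^d` with `π₀ + π₁ = 1`, a
unit vector `ψ ∈ ℂ^d`, and `k ≤ n`, the sum `Π` of the `n`-fold Kronecker products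
`π_{b₁} ⊗ ⋯ ⊗ π_{bₙ}` over binary strings `b` with exactly `n − k` ones satisfies
`⟨ψ^{⊗n}, Π ψ^{⊗n}⟩ ≤ exp(−2·n·(⟨ψ, π₀ ψ⟩ − k/n)²)`. -/
theorem tensor_power_typicality_bound
    (d n : ℕ) (hd : 1 ≤ d) (hn : 1 ≤ n)
    (π₀ π₁ : Matrix (Fin d) (Fin d) ℂ)
    (hπ₀herm : π₀.IsHermitian) (hπ₀idem : π₀ * π₀ = π₀)
    (hπ₁herm : π₁.IsHermitian) (hπ₁idem : π₁ * π₁ = π₁)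
    (hsum : π₀ + π₁ = 1)
    (ψ : Fin d → ℂ) (hψ : star ψ ⬝ᵥ ψ = 1)
    (k : ℕ) (hk : k ≤ n)
    (Pi : Matrix (Fin n → Fin d) (Fin n → Fin d) ℂ)
    (hPi : Pi = ∑ b ∈ Finset.univ.filter (fun b : Fin n → Fin 2 => ∑ i, (b i : ℕ) = n - k),
      Matrix.of (fun x y : Fin n → Fin d => ∏ i, (![π₀, π₁] (b i)) (x i) (y i)))
    (Ψ : (Fin n → Fin d) → ℂ) (hΨ : Ψ = fun x => ∏ i, ψ (x i)) :
    star Ψ ⬝ᵥ Pi.mulVec Ψ ≤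
      (Real.exp (-2 * n * ((star ψ ⬝ᵥ π₀.mulVec ψ).re - (k : ℝ) / n) ^ 2) : ℂ) :=
  tensor_power_typicality_bound_general d n π₀ π₁ hπ₀herm hπ₀idem hsum ψ hψ k hk Pi hPi Ψ hΨ
end

section
/- Let (Ω, P) be a probability space, 𝒳 a countable set equipped with the discrete σ-algebra, and (X_i)_{i∈ℕ} an exchangeable sequence of 𝒳-valued random variables on Ω. Then for every ξ ∈ 𝒳, the event consisting of all ω ∈ Ω such that the relative frequencies f_n(ξ)(ω) = (1/n)·|{i < n : X_i(ω) = ξ}| converge as n → ∞ to a limit that is greater than or equal to P(X_0 = ξ) has nonzero probability. -/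
/-!
Let `Y i` be the indicator of `{X i = ξ}` and `f n` the running mean of `Y 0, …, Y (n-1)`.
Exchangeability gives `E[Y i] = a := P(X 0 = ξ)` and `E[Y i * Y j] = b := P(X 0 = ξ, X 1 = ξ)`
for `i ≠ j`, so `E[(f m - f n)^2] = (a - b) (1/n - 1/m) ≤ (a - b)/n`. Along `n = k^4` the
increments therefore have summable `L²` norms, so `f (k^4)` converges almost surely; since
`0 ≤ Y i ≤ 1` the running mean moves little between consecutive fourth powers, and `f n`
converges almost surely to some `F`. By dominated convergence `E[F] = a`, and an integrable
function is at least its mean on a set of positive measure.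
-/

open MeasureTheory Filter Topology Finset
open scoped ENNReal

noncomputable def runningMean (y : ℕ → ℝ) (n : ℕ) : ℝ := 1 / n * ∑ i ∈ range n, y i

section RunningMean

variable {y : ℕ → ℝ}

theorem runningMean_nonneg (h0 : ∀ i, 0 ≤ y i) (n : ℕ) : 0 ≤ runningMean y n :=
  mul_nonneg (by positivity) (sum_nonneg fun i _ => h0 i)

theorem runningMean_le_one (h1 : ∀ i, y i ≤ 1) (n : ℕ) : runningMean y n ≤ 1 := by
  rcases n.eq_zero_or_pos with rfl | hn
  · simp [runningMean]
  calc runningMean y n ≤ 1 / n * ∑ _i ∈ range n, (1 : ℝ) := by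
        unfold runningMean; gcongr with i; exact h1 i
    _ = 1 := by field_simp; simp

theorem abs_runningMean_le_one (h0 : ∀ i, 0 ≤ y i) (h1 : ∀ i, y i ≤ 1) (n : ℕ) :
    |runningMean y n| ≤ 1 :=
  abs_le.mpr ⟨by linarith [runningMean_nonneg h0 n], runningMean_le_one h1 n⟩

theorem abs_runningMean_sub_le (h0 : ∀ i, 0 ≤ y i) (h1 : ∀ i, y i ≤ 1) {m n : ℕ} (hmn : m ≤ n) :
    |runningMean y n - runningMean y m| ≤ 1 - m / n := by
  rcases m.eq_zero_or_pos with rfl | hm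
  · have hzero : runningMean y 0 = 0 := by simp [runningMean]
    simpa [hzero, abs_of_nonneg (runningMean_nonneg h0 n)] using runningMean_le_one h1 n
  obtain ⟨d, rfl⟩ := Nat.exists_eq_add_of_le hmn
  set T := ∑ i ∈ range d, y (m + i)
  have hT0 : 0 ≤ T := sum_nonneg fun i _ => h0 _
  have hT1 : T ≤ d := by simpa using sum_le_sum fun i (_ : i ∈ range d) => h1 (m + i)
  have hsplit : runningMean y (m + d) - runningMean y m
      = T / (m + d : ℕ) - (1 - m / (m + d : ℕ)) * runningMean y m := by
    simp only [runningMean, sum_range_add, T]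
    push_cast
    field_simp
    ring
  have hTle : T / (m + d : ℕ) ≤ 1 - m / (m + d : ℕ) := by
    push_cast
    rw [div_le_iff₀ (by positivity)]
    field_simp
    linarith
  have hfrac : 0 ≤ 1 - (m : ℝ) / (m + d : ℕ) := by
    rw [sub_nonneg, div_le_one (by positivity)]; exact_mod_cast Nat.le_add_right m d
  rw [hsplit, abs_sub_le_iff]
  constructor
  · nlinarith [runningMean_nonneg h0 m, div_nonneg hT0 (Nat.cast_nonneg (m + d))]
  · nlinarith [runningMean_le_one h1 m, runningMean_nonneg h0 m,
      div_nonneg hT0 (Nat.cast_nonneg (m + d))]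

theorem tendsto_runningMean_of_tendsto_comp (h0 : ∀ i, 0 ≤ y i) (h1 : ∀ i, y i ≤ 1)
    {m : ℕ → ℕ} (hm : ∀ n, m n ≤ n) (hratio : Tendsto (fun n => (m n : ℝ) / n) atTop (𝓝 1))
    {L : ℝ} (hL : Tendsto (fun n => runningMean y (m n)) atTop (𝓝 L)) :
    Tendsto (runningMean y) atTop (𝓝 L) := by
  have hgap : Tendsto (fun n => 1 - (m n : ℝ) / n) atTop (𝓝 0) := by
    simpa using (tendsto_const_nhds (x := (1 : ℝ))).sub hratio
  rw [← tendsto_sub_nhds_zero_iff] at hL ⊢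
  refine squeeze_zero_norm (fun n => ?_) (by simpa using hgap.add hL.abs)
  calc ‖runningMean y n - L‖
      ≤ |runningMean y n - runningMean y (m n)| + |runningMean y (m n) - L| :=
        abs_sub_le _ _ _
    _ ≤ 1 - (m n : ℝ) / n + |runningMean y (m n) - L| := by
        gcongr; exact abs_runningMean_sub_le h0 h1 (hm n)

end RunningMean

theorem Nat.tendsto_sqrt_atTop : Tendsto Nat.sqrt atTop atTop :=
  tendsto_atTop_atTop.mpr fun b => ⟨b * b, fun _ hn => Nat.le_sqrt.mpr hn⟩

theorem Nat.sqrt_sqrt_pow_four_le (n : ℕ) : n.sqrt.sqrt ^ 4 ≤ n :=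
  calc n.sqrt.sqrt ^ 4 = (n.sqrt.sqrt ^ 2) ^ 2 := by ring
    _ ≤ n.sqrt ^ 2 := Nat.pow_le_pow_left (Nat.sqrt_le' _) 2
    _ ≤ n := Nat.sqrt_le' n

theorem Nat.lt_sqrt_sqrt_add_one_pow_four (n : ℕ) : n < (n.sqrt.sqrt + 1) ^ 4 :=
  calc n < (n.sqrt + 1) ^ 2 := Nat.lt_succ_sqrt' n
    _ ≤ ((n.sqrt.sqrt + 1) ^ 2) ^ 2 := Nat.pow_le_pow_left (Nat.lt_succ_sqrt' _) 2
    _ = (n.sqrt.sqrt + 1) ^ 4 := by ring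

theorem Nat.tendsto_sqrt_sqrt_pow_four_div_self :
    Tendsto (fun n : ℕ => ((n.sqrt.sqrt ^ 4 : ℕ) : ℝ) / n) atTop (𝓝 1) := by
  have hr : Tendsto (fun n : ℕ => n.sqrt.sqrt) atTop atTop :=
    Nat.tendsto_sqrt_atTop.comp Nat.tendsto_sqrt_atTop
  have hlower :
      Tendsto (fun n : ℕ => ((n.sqrt.sqrt : ℝ) / (n.sqrt.sqrt + 1)) ^ 4) atTop (𝓝 1) := by
    simpa using ((tendsto_natCast_div_add_atTop (1 : ℝ)).comp hr).pow 4
  refine tendsto_of_tendsto_of_tendsto_of_le_of_le' hlower tendsto_const_nhds ?_ ?_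
  · filter_upwards [eventually_gt_atTop 0] with n hn
    have hlt : (n : ℝ) < (n.sqrt.sqrt + 1) ^ 4 := by
      exact_mod_cast Nat.lt_sqrt_sqrt_add_one_pow_four n
    rw [div_pow]
    push_cast
    gcongr
  · exact Eventually.of_forall fun n =>
      div_le_one_of_le₀ (by exact_mod_cast Nat.sqrt_sqrt_pow_four_le n) n.cast_nonneg

theorem tendsto_runningMean_of_tendsto_pow_four {y : ℕ → ℝ} (h0 : ∀ i, 0 ≤ y i)
    (h1 : ∀ i, y i ≤ 1) {L : ℝ} (hL : Tendsto (fun k => runningMean y (k ^ 4)) atTop (𝓝 L)) :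
    Tendsto (runningMean y) atTop (𝓝 L) :=
  tendsto_runningMean_of_tendsto_comp h0 h1 Nat.sqrt_sqrt_pow_four_le
    Nat.tendsto_sqrt_sqrt_pow_four_div_self
    (hL.comp (Nat.tendsto_sqrt_atTop.comp Nat.tendsto_sqrt_atTop))

section Probability

variable {Ω : Type*} [MeasurableSpace Ω] {μ : Measure Ω}

theorem ae_exists_tendsto_of_tsum_eLpNorm_sub_ne_top {E : Type*} [NormedAddCommGroup E]
    [CompleteSpace E] {p : ℝ≥0∞} (hp : 1 ≤ p) {g : ℕ → Ω → E}
    (hg : ∀ k, AEStronglyMeasurable (g k) μ) (hsum : ∑' k, eLpNorm (g (k + 1) - g k) p μ ≠ ∞) :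
    ∀ᵐ ω ∂μ, ∃ ℓ, Tendsto (fun k => g k ω) atTop (𝓝 ℓ) := by
  filter_upwards [summable_norm_of_tsum_eLpNorm_ne_top hp (fun k => (hg (k + 1)).sub (hg k)) hsum]
    with ω hω
  have htel := (Summable.of_norm hω).hasSum.tendsto_sum_nat
  simp only [Pi.sub_apply, sum_range_sub (fun k => g k ω)] at htel
  exact ⟨_, by simpa using htel.add_const (g 0 ω)⟩

theorem eLpNorm_two_eq_ofReal_sqrt {f : Ω → ℝ} (hf : MemLp f 2 μ) :
    eLpNorm f 2 μ = ENNReal.ofReal √(∫ ω, f ω ^ 2 ∂μ) := by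
  rw [hf.eLpNorm_eq_integral_rpow_norm two_ne_zero ENNReal.ofNat_ne_top, Real.sqrt_eq_rpow]
  simp

theorem measurable_runningMean {Y : ℕ → Ω → ℝ} (hY : ∀ i, Measurable (Y i)) (n : ℕ) :
    Measurable fun ω => runningMean (Y · ω) n :=
  (Finset.measurable_sum _ fun i _ => hY i).const_mul _

theorem ae_exists_tendsto_runningMean [IsFiniteMeasure μ] {Y : ℕ → Ω → ℝ}
    (hY : ∀ i, Measurable (Y i)) (h0 : ∀ i ω, 0 ≤ Y i ω) (h1 : ∀ i ω, Y i ω ≤ 1) {C : ℝ}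
    (hC : ∀ n m, 0 < n → n ≤ m →
      ∫ ω, (runningMean (Y · ω) m - runningMean (Y · ω) n) ^ 2 ∂μ ≤ C / n) :
    ∀ᵐ ω ∂μ, ∃ L, Tendsto (runningMean (Y · ω)) atTop (𝓝 L) := by
  set g : ℕ → Ω → ℝ := fun k ω => runningMean (Y · ω) ((k + 1) ^ 4)
  have hg : ∀ k, Measurable (g k) := fun k => measurable_runningMean hY _
  have hincr : ∀ k, eLpNorm (g (k + 1) - g k) 2 μ ≤ ENNReal.ofReal (√C / (k + 1) ^ 2) := by
    intro k
    have hmem : MemLp (g (k + 1) - g k) 2 μ := by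
      refine MemLp.of_bound ((hg _).sub (hg k)).aestronglyMeasurable 1
        (Eventually.of_forall fun ω => ?_)
      exact abs_sub_le_of_nonneg_of_le (runningMean_nonneg (h0 · ω) _)
        (runningMean_le_one (h1 · ω) _) (runningMean_nonneg (h0 · ω) _)
        (runningMean_le_one (h1 · ω) _)
    have hsq : ∫ ω, (g (k + 1) - g k) ω ^ 2 ∂μ ≤ C / (((k + 1) ^ 4 : ℕ) : ℝ) :=
      hC _ _ (by positivity) (Nat.pow_le_pow_left (by omega) 4)
    rw [eLpNorm_two_eq_ofReal_sqrt hmem]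
    refine ENNReal.ofReal_le_ofReal ((Real.sqrt_le_sqrt hsq).trans_eq ?_)
    rw [Real.sqrt_div' _ (by positivity)]
    push_cast
    rw [show ((k : ℝ) + 1) ^ 4 = (((k : ℝ) + 1) ^ 2) ^ 2 by ring, Real.sqrt_sq (by positivity)]
  have hsum : ∑' k, eLpNorm (g (k + 1) - g k) 2 μ ≠ ∞ := by
    have hsumm : Summable fun k : ℕ => √C / ((k : ℝ) + 1) ^ 2 := by
      simpa [div_eq_mul_inv] using
        ((summable_nat_add_iff 1).mpr (Real.summable_one_div_nat_pow.mpr one_lt_two)).mul_left √C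
    refine ne_top_of_le_ne_top ?_ (ENNReal.tsum_le_tsum hincr)
    rw [← ENNReal.ofReal_tsum_of_nonneg (fun k => by positivity) hsumm]
    exact ENNReal.ofReal_ne_top
  filter_upwards [ae_exists_tendsto_of_tsum_eLpNorm_sub_ne_top one_le_two
    (fun k => (hg k).aestronglyMeasurable) hsum] with ω ⟨L, hL⟩
  exact ⟨L, tendsto_runningMean_of_tendsto_pow_four (h0 · ω) (h1 · ω)
    ((tendsto_add_atTop_iff_nat 1).mp hL)⟩

theorem integral_sq_sum_of_integral_mul_eq_ite {ι : Type*} [DecidableEq ι] {Y : ι → Ω → ℝ}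
    {α β : ℝ} (hY : ∀ i j, Integrable (fun ω => Y i ω * Y j ω) μ)
    (hmom : ∀ i j, ∫ ω, Y i ω * Y j ω ∂μ = if i = j then α else β) (s : Finset ι) (c : ι → ℝ) :
    ∫ ω, (∑ i ∈ s, c i * Y i ω) ^ 2 ∂μ = (α - β) * ∑ i ∈ s, c i ^ 2 + β * (∑ i ∈ s, c i) ^ 2 := by
  calc ∫ ω, (∑ i ∈ s, c i * Y i ω) ^ 2 ∂μ
        = ∫ ω, ∑ i ∈ s, ∑ j ∈ s, c i * c j * (Y i ω * Y j ω) ∂μ := by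
          congr with ω
          rw [sq, sum_mul_sum]
          exact sum_congr rfl fun i _ => sum_congr rfl fun j _ => by ring
      _ = ∑ i ∈ s, ∑ j ∈ s, (β * (c i * c j) + if i = j then (α - β) * (c i * c j) else 0) := by
          rw [integral_finsetSum _ fun i _ =>
            integrable_finsetSum _ fun j _ => (hY i j).const_mul _]
          refine sum_congr rfl fun i _ => ?_
          rw [integral_finsetSum _ fun j _ => (hY i j).const_mul _]
          refine sum_congr rfl fun j _ => ?_
          rw [integral_const_mul, hmom]
          split_ifs <;> ring
      _ = (α - β) * ∑ i ∈ s, c i ^ 2 + β * (∑ i ∈ s, c i) ^ 2 := by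
          simp only [sum_add_distrib, sum_ite_eq, ← mul_sum, sq, sum_mul_sum]
          simp [mul_sum, add_comm]

theorem integral_sq_runningMean_sub {Y : ℕ → Ω → ℝ} {α β : ℝ}
    (hY : ∀ i j, Integrable (fun ω => Y i ω * Y j ω) μ)
    (hmom : ∀ i j, ∫ ω, Y i ω * Y j ω ∂μ = if i = j then α else β) {n m : ℕ} (hn : 0 < n)
    (hnm : n ≤ m) :
    ∫ ω, (runningMean (Y · ω) m - runningMean (Y · ω) n) ^ 2 ∂μ = (α - β) * (1 / n - 1 / m) := by
  obtain ⟨d, rfl⟩ := Nat.exists_eq_add_of_le hnm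
  set c : ℕ → ℝ := fun i => 1 / (n + d : ℕ) - if i < n then 1 / (n : ℝ) else 0
  have hsplit : ∀ f : ℕ → ℝ, ∑ i ∈ range (n + d), f i
      = ∑ i ∈ range n, f i + ∑ i ∈ range d, f (n + i) := fun f => sum_range_add f n d
  have hc_lt : ∀ i ∈ range n, c i = 1 / (n + d : ℕ) - 1 / n := fun i hi => by
    simp [c, mem_range.mp hi]
  have hc_ge : ∀ i ∈ range d, c (n + i) = 1 / (n + d : ℕ) := fun i _ => by simp [c]
  have hdiff : ∀ ω, runningMean (Y · ω) (n + d) - runningMean (Y · ω) n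
      = ∑ i ∈ range (n + d), c i * Y i ω := by
    intro ω
    simp only [runningMean, hsplit fun i => c i * Y i ω, hsplit fun i => Y i ω,
      sum_congr rfl fun i hi => congrArg (· * Y i ω) (hc_lt i hi),
      sum_congr rfl fun i hi => congrArg (· * Y (n + i) ω) (hc_ge i hi)]
    rw [← mul_sum, ← mul_sum]
    ring
  have hsum : ∑ i ∈ range (n + d), c i = 0 := by
    rw [hsplit, sum_congr rfl hc_lt, sum_congr rfl hc_ge]
    simp only [Nat.cast_add, one_div, sum_sub_distrib, sum_const, card_range, nsmul_eq_mul]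
    field_simp
    ring
  have hsum_sq : ∑ i ∈ range (n + d), c i ^ 2 = 1 / n - 1 / (n + d : ℕ) := by
    rw [hsplit, sum_congr rfl fun i hi => congrArg (· ^ 2) (hc_lt i hi),
      sum_congr rfl fun i hi => congrArg (· ^ 2) (hc_ge i hi)]
    simp only [Nat.cast_add, one_div, sum_const, card_range, nsmul_eq_mul, inv_pow]
    field_simp
    ring
  simp only [hdiff, integral_sq_sum_of_integral_mul_eq_ite hY hmom, hsum, hsum_sq]
  ring

theorem ae_exists_tendsto_runningMean_of_integral_mul_eq_ite [IsFiniteMeasure μ]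
    {Y : ℕ → Ω → ℝ} (hY : ∀ i, Measurable (Y i)) (h0 : ∀ i ω, 0 ≤ Y i ω) (h1 : ∀ i ω, Y i ω ≤ 1)
    {α β : ℝ} (hmom : ∀ i j, ∫ ω, Y i ω * Y j ω ∂μ = if i = j then α else β) (hβα : β ≤ α) :
    ∀ᵐ ω ∂μ, ∃ L, Tendsto (runningMean (Y · ω)) atTop (𝓝 L) := by
  have hint : ∀ i j, Integrable (fun ω => Y i ω * Y j ω) μ := fun i j =>
    Integrable.of_bound ((hY i).mul (hY j)).aestronglyMeasurable 1 (Eventually.of_forall fun ω => by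
      rw [Real.norm_eq_abs, abs_mul, abs_of_nonneg (h0 i ω), abs_of_nonneg (h0 j ω)]
      exact mul_le_one₀ (h1 i ω) (h0 j ω) (h1 j ω))
  refine ae_exists_tendsto_runningMean hY h0 h1 (C := α - β) fun n m hn hnm => ?_
  calc _ = (α - β) * (1 / n - 1 / m) := integral_sq_runningMean_sub hint hmom hn hnm
    _ ≤ (α - β) * (1 / n) :=
        mul_le_mul_of_nonneg_left (sub_le_self _ (by positivity)) (sub_nonneg.mpr hβα)
    _ = (α - β) / n := mul_one_div _ _

theorem integral_runningMean {Y : ℕ → Ω → ℝ} {α : ℝ} (hY : ∀ i, Integrable (Y i) μ)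
    (hmean : ∀ i, ∫ ω, Y i ω ∂μ = α) {n : ℕ} (hn : 0 < n) :
    ∫ ω, runningMean (Y · ω) n ∂μ = α := by
  simp only [runningMean]
  rw [integral_const_mul, integral_finsetSum _ fun i _ => hY i]
  simp only [one_div, hmean, sum_const, card_range, nsmul_eq_mul]
  field_simp

theorem measure_exists_tendsto_ge_pos [IsProbabilityMeasure μ] {f : ℕ → Ω → ℝ} {a c : ℝ}
    (hf : ∀ n, AEStronglyMeasurable (f n) μ) (hc : ∀ n ω, |f n ω| ≤ c)
    (hlim : ∀ᵐ ω ∂μ, ∃ L, Tendsto (f · ω) atTop (𝓝 L))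
    (hint : Tendsto (fun n => ∫ ω, f n ω ∂μ) atTop (𝓝 a)) :
    0 < μ {ω | ∃ L, Tendsto (f · ω) atTop (𝓝 L) ∧ a ≤ L} := by
  set F : Ω → ℝ := fun ω => limUnder atTop (f · ω)
  have hF : ∀ᵐ ω ∂μ, Tendsto (f · ω) atTop (𝓝 (F ω)) := by
    filter_upwards [hlim] with ω ⟨L, hL⟩
    rwa [show F ω = L from hL.limUnder_eq]
  have hFc : ∀ᵐ ω ∂μ, ‖F ω‖ ≤ c := by
    filter_upwards [hF] with ω hω
    exact le_of_tendsto hω.norm (Eventually.of_forall fun n => hc n ω)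
  have hFint : Integrable F μ :=
    (integrable_const c).mono' (aestronglyMeasurable_of_tendsto_ae atTop hf hF) hFc
  have hintF : ∫ ω, F ω ∂μ = a :=
    tendsto_nhds_unique (tendsto_integral_of_dominated_convergence (fun _ => c) hf
      (integrable_const c) (fun n => Eventually.of_forall (hc n)) hF) hint
  refine (hintF ▸ measure_integral_le_pos hFint).trans_le (measure_mono_ae ?_)
  filter_upwards [hF] with ω hω hle
  exact ⟨F ω, hω, hle⟩

section Exchangeable

variable {𝒳 : Type*} [MeasurableSpace 𝒳]

def IsExchangeable (P : Measure Ω) (X : ℕ → Ω → 𝒳) : Prop :=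
  ∀ (n : ℕ) (σ : Equiv.Perm (Fin n)),
    P.map (fun ω => fun i : Fin n => X (σ i : ℕ) ω) = P.map (fun ω => fun i : Fin n => X (i : ℕ) ω)

variable {P : Measure Ω} {X : ℕ → Ω → 𝒳}

theorem IsExchangeable.map_comp_injective (hexch : IsExchangeable P X)
    (hX : ∀ i, Measurable (X i)) {m : ℕ} {k : Fin m → ℕ} (hk : Function.Injective k) :
    P.map (fun ω (l : Fin m) => X (k l) ω) = P.map (fun ω (l : Fin m) => X l ω) := by
  obtain ⟨n, hmn, hkn⟩ : ∃ n, m ≤ n ∧ ∀ l, k l < n :=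
    ⟨m + ∑ l, k l + 1, by omega, fun l => by
      have := single_le_sum (fun l _ => Nat.zero_le (k l)) (mem_univ l); omega⟩
  obtain ⟨σ, hσ⟩ := Equiv.Perm.exists_extending_pair (Fin.castLE hmn)
    (fun l => (⟨k l, hkn l⟩ : Fin n)) (Fin.castLE_injective hmn)
    (fun a b h => hk (Fin.mk.inj_iff.mp h))
  set restrict : (Fin n → 𝒳) → (Fin m → 𝒳) := fun v l => v (Fin.castLE hmn l)
  have hrestrict : Measurable restrict := measurable_pi_lambda _ fun l => measurable_pi_apply _
  have hmeas : ∀ τ : Fin n → ℕ, Measurable fun ω (j : Fin n) => X (τ j) ω :=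
    fun τ => measurable_pi_lambda _ fun j => hX _
  calc P.map (fun ω l => X (k l) ω)
      = (P.map fun ω (j : Fin n) => X (σ j) ω).map restrict := by
        rw [Measure.map_map hrestrict (hmeas _)]
        congr with ω l
        simp [restrict, hσ]
    _ = (P.map fun ω (j : Fin n) => X j ω).map restrict := by rw [hexch n σ]
    _ = P.map fun ω (l : Fin m) => X l ω := by rw [Measure.map_map hrestrict (hmeas _)]; rfl

theorem IsExchangeable.measure_preimage_inter_preimage (hexch : IsExchangeable P X)
    (hX : ∀ i, Measurable (X i)) {i j : ℕ} (hij : i ≠ j) {A B : Set 𝒳}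
    (hA : MeasurableSet A) (hB : MeasurableSet B) :
    P (X i ⁻¹' A ∩ X j ⁻¹' B) = P (X 0 ⁻¹' A ∩ X 1 ⁻¹' B) := by
  have hS : MeasurableSet {v : Fin 2 → 𝒳 | v 0 ∈ A ∧ v 1 ∈ B} :=
    (measurable_pi_apply 0 hA).inter (measurable_pi_apply 1 hB)
  have hk : Function.Injective ![i, j] :=
    Fin.cons_injective_iff.mpr ⟨by simpa using hij, Function.injective_of_subsingleton _⟩
  have := congrArg (· {v : Fin 2 → 𝒳 | v 0 ∈ A ∧ v 1 ∈ B}) (hexch.map_comp_injective hX hk)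
  rwa [Measure.map_apply (measurable_pi_lambda _ fun l => hX _) hS,
    Measure.map_apply (measurable_pi_lambda _ fun l => hX _) hS] at this

theorem IsExchangeable.measure_preimage (hexch : IsExchangeable P X)
    (hX : ∀ i, Measurable (X i)) (i : ℕ) {A : Set 𝒳} (hA : MeasurableSet A) :
    P (X i ⁻¹' A) = P (X 0 ⁻¹' A) := by
  simpa using
    hexch.measure_preimage_inter_preimage hX (Nat.succ_ne_self i).symm hA MeasurableSet.univ

theorem IsExchangeable.integral_indicator (hexch : IsExchangeable P X)
    (hX : ∀ i, Measurable (X i)) {A : Set 𝒳} (hA : MeasurableSet A) (i : ℕ) :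
    ∫ ω, (X i ⁻¹' A).indicator 1 ω ∂P = P.real (X 0 ⁻¹' A) := by
  rw [integral_indicator_one (hX i hA), measureReal_def, measureReal_def,
    hexch.measure_preimage hX i hA]

theorem IsExchangeable.integral_indicator_mul_indicator (hexch : IsExchangeable P X)
    (hX : ∀ i, Measurable (X i)) {A : Set 𝒳} (hA : MeasurableSet A) (i j : ℕ) :
    ∫ ω, (X i ⁻¹' A).indicator 1 ω * (X j ⁻¹' A).indicator 1 ω ∂P =
      if i = j then P.real (X 0 ⁻¹' A) else P.real (X 0 ⁻¹' A ∩ X 1 ⁻¹' A) := by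
  rw [show (fun ω => (X i ⁻¹' A).indicator 1 ω * (X j ⁻¹' A).indicator (1 : Ω → ℝ) ω)
      = (X i ⁻¹' A ∩ X j ⁻¹' A).indicator 1 by rw [Set.inter_indicator_one]; rfl,
    integral_indicator_one ((hX i hA).inter (hX j hA))]
  split_ifs with hij
  · subst hij
    rw [Set.inter_self, measureReal_def, measureReal_def, hexch.measure_preimage hX i hA]
  · rw [measureReal_def, measureReal_def, hexch.measure_preimage_inter_preimage hX hij hA hA]

end Exchangeable

end Probability

theorem exchangeable_limit_frequency_ge_prob_general
    {Ω : Type*} [MeasurableSpace Ω] (P : Measure Ω) [IsProbabilityMeasure P]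
    {𝒳 : Type*} [MeasurableSpace 𝒳] [DiscreteMeasurableSpace 𝒳]
    [DecidableEq 𝒳]
    (X : ℕ → Ω → 𝒳) (hX : ∀ i, Measurable (X i))
    (hexch : ∀ (n : ℕ) (σ : Equiv.Perm (Fin n)),
      P.map (fun ω => fun i : Fin n => X (σ i : ℕ) ω) =
        P.map (fun ω => fun i : Fin n => X (i : ℕ) ω))
    (ξ : 𝒳) :
    P {ω | ∃ L : ℝ,
        Tendsto
          (fun n : ℕ =>
            (1 / (n : ℝ)) * ((Finset.range n).filter (fun i => X i ω = ξ)).card)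
          atTop (nhds L) ∧
        (P {ω' | X 0 ω' = ξ}).toReal ≤ L} ≠ 0 := by
  have hexch' : IsExchangeable P X := hexch
  have hξ : ∀ i, MeasurableSet (X i ⁻¹' {ξ}) := fun i => hX i (measurableSet_singleton ξ)
  set Y : ℕ → Ω → ℝ := fun i => (X i ⁻¹' {ξ}).indicator 1
  have hfreq : ∀ ω (n : ℕ), 1 / (n : ℝ) * ((Finset.range n).filter (fun i => X i ω = ξ)).card
      = runningMean (Y · ω) n := fun ω n => by
    simp only [runningMean, Finset.natCast_card_filter]
    congr 1
    exact sum_congr rfl fun i _ => by simp [Y, Set.indicator]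
  simp only [hfreq]
  have hY : ∀ i, Measurable (Y i) := fun i => measurable_one.indicator (hξ i)
  have h0 : ∀ i ω, 0 ≤ Y i ω := fun i => Set.indicator_nonneg fun _ _ => zero_le_one
  have h1 : ∀ i ω, Y i ω ≤ 1 := fun i => Set.indicator_le_self' fun _ _ => zero_le_one
  have hlim := ae_exists_tendsto_runningMean_of_integral_mul_eq_ite hY h0 h1
    (hexch'.integral_indicator_mul_indicator hX (measurableSet_singleton ξ))
    (measureReal_mono Set.inter_subset_left)
  have hmean : ∀ᶠ n in atTop, ∫ ω, runningMean (Y · ω) n ∂P = P.real (X 0 ⁻¹' {ξ}) :=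
    (eventually_gt_atTop 0).mono fun n hn => integral_runningMean
      (fun i => (integrable_const 1).indicator (hξ i))
      (hexch'.integral_indicator hX (measurableSet_singleton ξ)) hn
  exact (measure_exists_tendsto_ge_pos (fun n => (measurable_runningMean hY n).aestronglyMeasurable)
    (fun n ω => abs_runningMean_le_one (h0 · ω) (h1 · ω) n) hlim
    (tendsto_const_nhds.congr' (hmean.mono fun _ h => h.symm))).ne'

/-- Let `(Ω, P)` be a probability space, `𝒳` a countable set with the
discrete σ-algebra, and `(X_i)` an exchangeable sequence of `𝒳`-valued random variables.
Then for every `ξ ∈ 𝒳`, the event that the relative frequencies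
`f_n(ξ) = (1/n)·|{i < n : X_i = ξ}|` converge to a limit `≥ P(X_0 = ξ)` has nonzero
probability. -/
theorem exchangeable_limit_frequency_ge_prob
    {Ω : Type*} [MeasurableSpace Ω] (P : Measure Ω) [IsProbabilityMeasure P]
    {𝒳 : Type*} [Countable 𝒳] [MeasurableSpace 𝒳] [DiscreteMeasurableSpace 𝒳]
    [DecidableEq 𝒳]
    (X : ℕ → Ω → 𝒳) (hX : ∀ i, Measurable (X i))
    (hexch : ∀ (n : ℕ) (σ : Equiv.Perm (Fin n)),
      P.map (fun ω => fun i : Fin n => X (σ i : ℕ) ω) =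
        P.map (fun ω => fun i : Fin n => X (i : ℕ) ω))
    (ξ : 𝒳) :
    P {ω | ∃ L : ℝ,
        Tendsto
          (fun n : ℕ =>
            (1 / (n : ℝ)) * ((Finset.range n).filter (fun i => X i ω = ξ)).card)
          atTop (nhds L) ∧
        (P {ω' | X 0 ω' = ξ}).toReal ≤ L} ≠ 0 :=
  exchangeable_limit_frequency_ge_prob_general P X hX hexch ξ
end
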